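/- arXiv:2205.03200 — 2 statements merged into one kernel-verified Lean document; each statement's English description precedes it below -/
import Mathlib

section
/- Let M be an n × (n+2) integer matrix such that for every integer q ≥ 2, the only vector p ∈ (ZMod q)^(n+2) with (M mod q)·p = 0 and with the last two coordinates zero is p = 0. Then for every c ∈ Z^n there exists a unique p ∈ Z^(n+2) with last two coordinates zero such that M·p = −c. -/
/-!
The hypothesis at a prime `p` says that the leading `n × n` block `A` of `M` has trivial kernel
over `ZMod p`, i.e. `p ∤ det A`. As this holds for every prime, `det A = ±1`, so `A` is
invertible over `ℤ`, and the solutions of `M p = -c` supported on the first `n` coordinates are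
exactly the zero-paddings of the unique solution of `A v = -c`.
-/

open Matrix

theorem Fin.append_comp_castAdd_zero {α : Type*} [Zero α] {n k : ℕ} {p : Fin (n + k) → α}
    (hp : ∀ i, p (Fin.natAdd n i) = 0) : Fin.append (p ∘ Fin.castAdd k) 0 = p := by
  conv_rhs => rw [← Fin.append_castAdd_natAdd (f := p)]
  simp only [hp]
  rfl

namespace Matrix

theorem mulVec_bijective_of_isUnit {ι R : Type*} [Fintype ι] [DecidableEq ι] [CommRing R]
    {A : Matrix ι ι R} (hA : IsUnit A) : Function.Bijective A.mulVec := by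
  refine ⟨?_, mulVec_surjective_iff_isUnit.mpr hA⟩
  obtain ⟨B, hBA⟩ := hA.exists_left_inv
  refine Function.LeftInverse.injective (g := B.mulVec) fun v => ?_
  rw [mulVec_mulVec, hBA, one_mulVec]

theorem isUnit_of_ker_map_zmod_trivial {ι : Type*} [Fintype ι] [DecidableEq ι]
    (A : Matrix ι ι ℤ)
    (h : ∀ p : ℕ, p.Prime → ∀ v : ι → ZMod p, A.map (Int.cast : ℤ → ZMod p) *ᵥ v = 0 → v = 0) :
    IsUnit A := by
  rw [isUnit_iff_isUnit_det, Int.isUnit_iff_natAbs_eq]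
  by_contra hdet
  obtain ⟨p, hp, hp_dvd⟩ := Nat.exists_prime_and_dvd hdet
  have := Fact.mk hp
  have hdet_mod : (A.map (Int.cast : ℤ → ZMod p)).det = 0 := by
    rw [← Int.cast_det, ZMod.intCast_zmod_eq_zero_iff_dvd]
    exact Int.natCast_dvd.mpr hp_dvd
  obtain ⟨v, hv_ne, hv⟩ := exists_mulVec_eq_zero_iff.mpr hdet_mod
  exact hv_ne (h p hp v hv)

theorem mulVec_append_zero {ι R : Type*} [NonUnitalNonAssocSemiring R] {n k : ℕ}
    (M : Matrix ι (Fin (n + k)) R) (v : Fin n → R) :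
    M *ᵥ Fin.append v 0 = M.submatrix id (Fin.castAdd k) *ᵥ v := by
  ext i
  simp [mulVec, dotProduct, Fin.sum_univ_add]

theorem existsUnique_mulVec_eq_of_isUnit_submatrix_castAdd {R : Type*} [CommRing R] {n k : ℕ}
    {M : Matrix (Fin n) (Fin (n + k)) R} (hA : IsUnit (M.submatrix id (Fin.castAdd k)))
    (b : Fin n → R) :
    ∃! p : Fin (n + k) → R, (∀ i, p (Fin.natAdd n i) = 0) ∧ M *ᵥ p = b := by
  obtain ⟨v, hv, hv_uniq⟩ := (mulVec_bijective_of_isUnit hA).existsUnique b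
  refine ⟨Fin.append v 0, ⟨fun i => by simp, by rw [mulVec_append_zero, hv]⟩, ?_⟩
  rintro p ⟨hp_zero, hp⟩
  rw [← Fin.append_comp_castAdd_zero hp_zero, hv_uniq (p ∘ Fin.castAdd k)]
  beta_reduce
  rwa [← mulVec_append_zero, Fin.append_comp_castAdd_zero hp_zero]

end Matrix

theorem stmt_4 (n : ℕ) (M : Matrix (Fin n) (Fin (n + 2)) ℤ)
    (h : ∀ q : ℕ, 2 ≤ q → ∀ p : Fin (n + 2) → ZMod q,
        (M.map (Int.cast : ℤ → ZMod q)).mulVec p = 0 →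
        p ⟨n, by omega⟩ = 0 → p ⟨n + 1, by omega⟩ = 0 → p = 0) :
    ∀ c : Fin n → ℤ,
      ∃! p : Fin (n + 2) → ℤ,
        p ⟨n, by omega⟩ = 0 ∧ p ⟨n + 1, by omega⟩ = 0 ∧ M.mulVec p = -c := by
  intro c
  have hA : IsUnit (M.submatrix id (Fin.castAdd 2)) := by
    refine isUnit_of_ker_map_zmod_trivial _ fun q hq v hv => ?_
    have hpad := h q hq.two_le (Fin.append v 0)
      (by rwa [mulVec_append_zero, submatrix_map]) (Fin.append_right v 0 0) (Fin.append_right v 0 1)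
    funext i
    simpa using congrFun hpad (Fin.castAdd 2 i)
  obtain ⟨p, ⟨hp_zero, hp⟩, hp_uniq⟩ := existsUnique_mulVec_eq_of_isUnit_submatrix_castAdd hA (-c)
  exact ⟨p, ⟨hp_zero 0, hp_zero 1, hp⟩,
    fun q ⟨hq₀, hq₁, hq⟩ => hp_uniq q ⟨Fin.forall_fin_two.mpr ⟨hq₀, hq₁⟩, hq⟩⟩
end

section
/- Let k ≥ 2 and let M be an n × (n+2) matrix over ZMod k such that the only p ∈ (ZMod k)^(n+2) with M·p = 0 and last two coordinates zero is p = 0. Then the kernel of M (as a linear map (ZMod k)^(n+2) → (ZMod k)^n) has cardinality exactly k². -/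
/-! The kernel of `M` meets the kernel of the projection onto the last two coordinates trivially,
so that projection embeds the kernel into `(ZMod k)²`, giving `≤ k²`. Conversely the kernel
has index `|range M| ≤ kⁿ` in `(ZMod k)ⁿ⁺²`, giving `≥ kⁿ⁺² / kⁿ = k²`. -/

namespace AddMonoidHom

variable {G H K : Type*} [AddGroup G] [AddGroup H] [AddGroup K]

theorem card_le_card_ker_mul_card [Finite H] (f : G →+ H) :
    Nat.card G ≤ Nat.card f.ker * Nat.card H := by
  rw [← f.ker.card_mul_index, AddSubgroup.index_ker]
  exact Nat.mul_le_mul_left _ (Nat.card_le_card_of_injective _ Subtype.val_injective)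

theorem card_ker_le_card_of_disjoint_ker [Finite K] (f : G →+ H) (g : G →+ K)
    (hfg : Disjoint f.ker g.ker) : Nat.card f.ker ≤ Nat.card K := by
  refine Nat.card_le_card_of_injective (g.comp f.ker.subtype) ?_
  exact (injective_iff_map_eq_zero _).2 fun x hx =>
    Subtype.ext (AddSubgroup.disjoint_def.1 hfg x.2 hx)

theorem card_ker_eq_of_disjoint_ker [Finite H] [Finite K] (f : G →+ H) (g : G →+ K)
    (hfg : Disjoint f.ker g.ker) (hcard : Nat.card G = Nat.card K * Nat.card H) :
    Nat.card f.ker = Nat.card K := by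
  refine le_antisymm (card_ker_le_card_of_disjoint_ker f g hfg) ?_
  refine Nat.le_of_mul_le_mul_right ?_ (Nat.card_pos (α := H))
  exact hcard ▸ f.card_le_card_ker_mul_card

end AddMonoidHom

theorem stmt_7 (k n : ℕ) (hk : 2 ≤ k)
    (M : Matrix (Fin n) (Fin (n + 2)) (ZMod k))
    (h : ∀ p : Fin (n + 2) → ZMod k, M.mulVec p = 0 →
        p ⟨n, by omega⟩ = 0 → p ⟨n + 1, by omega⟩ = 0 → p = 0) :
    Nat.card {p : Fin (n + 2) → ZMod k | M.mulVec p = 0} = k ^ 2 := by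
  have : NeZero k := ⟨by omega⟩
  let lastTwo : (Fin (n + 2) → ZMod k) →+ ZMod k × ZMod k :=
    (Pi.evalAddMonoidHom _ ⟨n, by omega⟩).prod (Pi.evalAddMonoidHom _ ⟨n + 1, by omega⟩)
  have hdisj : Disjoint M.mulVecLin.toAddMonoidHom.ker lastTwo.ker :=
    AddSubgroup.disjoint_def.2 fun {p} hp hlast =>
      h p hp (congrArg Prod.fst hlast) (congrArg Prod.snd hlast)
  have hcard : Nat.card (Fin (n + 2) → ZMod k) =
      Nat.card (ZMod k × ZMod k) * Nat.card (Fin n → ZMod k) := by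
    simp only [Nat.card_pi, Nat.card_prod, Nat.card_zmod, Finset.prod_const, Finset.card_univ,
      Fintype.card_fin, pow_add]
    ring
  have hker := M.mulVecLin.toAddMonoidHom.card_ker_eq_of_disjoint_ker lastTwo hdisj hcard
  rwa [Nat.card_prod, Nat.card_zmod, ← sq] at hker
end
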